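/- In the large global game: if H ⊆ Δ(T) is closed, then the map β ↦ F_β(H) is upper semicontinuous on Δ(T); consequently, for every closed H ⊆ Δ(T), the sets B_x(H) and C_x(H) are closed. -/

import Mathlib

open MeasureTheory
open scoped NNReal

noncomputable instance probMeasurableSpace {X : Type*} [MeasurableSpace X]
    [TopologicalSpace X] [OpensMeasurableSpace X] :
    MeasurableSpace (ProbabilityMeasure X) := borel _

instance probBorelSpace {X : Type*} [MeasurableSpace X]
    [TopologicalSpace X] [OpensMeasurableSpace X] :
    BorelSpace (ProbabilityMeasure X) := ⟨rfl⟩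

/-! The large global game: the action set is `A = {0,1}` (modeled as `Bool`, with
`false = 0 ≤ true = 1`), the set of states of nature is `S = [−1,2]`, and the payoff to a
player taking action `a` when the state of nature is `s` and the fraction of players playing
`1` is `ϑ` is `v(a,s,ϑ) = a·(s+ϑ−1)`.  `(T,σ,τ)` is a type space (no characteristics). -/

variable {T : Type*}
  [TopologicalSpace T] [CompactSpace T] [TopologicalSpace.MetrizableSpace T]
  [MeasurableSpace T] [BorelSpace T] [Nonempty T]

/-- Payoff in the global game: `v(a,s,ϑ) = a·(s+ϑ−1)`. -/
noncomputable def ggPayoff (a : Bool) (s ϑ : ℝ) : ℝ := if a then s + ϑ - 1 else 0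

/-- The fraction of players playing `1` under a belief-action profile `κ`. -/
noncomputable def ggTheta
    (κ : ProbabilityMeasure (ProbabilityMeasure T × Bool)) : ℝ :=
  (κ.toMeasure {p | p.2 = true}).toReal

/-- `𝒟_𝒮(t)`: profiles `κ ∈ Δ(Δ(T)×A)` supported on the graph of `𝒮` with
`Δ(T)`-marginal `τ(t)`. -/
def ggDOf (τ : T → ProbabilityMeasure (ProbabilityMeasure T))
    (𝒮 : ProbabilityMeasure T → Set Bool) (t : T) :
    Set (ProbabilityMeasure (ProbabilityMeasure T × Bool)) :=
  {κ | κ.toMeasure {p | p.2 ∈ 𝒮 p.1} = 1 ∧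
       κ.toMeasure.map Prod.fst = (τ t).toMeasure}

/-- `𝒮_𝒟(β)`: actions optimal against some belief `μ ∈ Δ(T×Δ(Δ(T)×A))` with `T`-marginal
`β` supported on the graph of `𝒟`. -/
noncomputable def ggSOf (σ : T → Set.Icc (-1:ℝ) 2)
    (𝒟 : T → Set (ProbabilityMeasure (ProbabilityMeasure T × Bool)))
    (β : ProbabilityMeasure T) : Set Bool :=
  {a | ∃ μ : ProbabilityMeasure (T × ProbabilityMeasure (ProbabilityMeasure T × Bool)),
    μ.toMeasure.map Prod.fst = β.toMeasure ∧
    μ.toMeasure {p | p.2 ∈ 𝒟 p.1} = 1 ∧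
    ∀ a' : Bool,
      ∫ p, ggPayoff a' (σ p.1 : ℝ) (ggTheta p.2) ∂μ.toMeasure ≤
      ∫ p, ggPayoff a (σ p.1 : ℝ) (ggTheta p.2) ∂μ.toMeasure}

/-- Iterated elimination: `𝒮₀(β) = {0,1}` and `𝒮_{m+1} = 𝒮_{𝒟_{𝒮_m}}`. -/
noncomputable def ggSseq (σ : T → Set.Icc (-1:ℝ) 2)
    (τ : T → ProbabilityMeasure (ProbabilityMeasure T)) :
    ℕ → (ProbabilityMeasure T → Set Bool)
  | 0 => fun _ => Set.univ
  | m + 1 => ggSOf σ (ggDOf τ (ggSseq σ τ m))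

/-- Interim correlated rationalizability in the global game. -/
noncomputable def ggSicr (σ : T → Set.Icc (-1:ℝ) 2)
    (τ : T → ProbabilityMeasure (ProbabilityMeasure T))
    (β : ProbabilityMeasure T) : Set Bool :=
  ⋂ m : ℕ, ggSseq σ τ m β

/-- The expected state `x_β = ∫ σ dβ` under the belief `β`. -/
noncomputable def xval (σ : T → Set.Icc (-1:ℝ) 2) (β : ProbabilityMeasure T) : ℝ :=
  ∫ t, (σ t : ℝ) ∂β.toMeasure

/-- `F_β(E) = ∫ τ(t)(E) dβ(t)`: the expected fraction of players with beliefs in `E`. -/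
noncomputable def Fval (τ : T → ProbabilityMeasure (ProbabilityMeasure T))
    (β : ProbabilityMeasure T) (E : Set (ProbabilityMeasure T)) : ℝ :=
  ∫ t, ((τ t E : ℝ≥0) : ℝ) ∂β.toMeasure

/-- The belief operator `B_f(E) = {β ∈ E : F_β(E) ≥ f(β)}`. -/
def Bop (τ : T → ProbabilityMeasure (ProbabilityMeasure T))
    (f : ProbabilityMeasure T → ℝ) (E : Set (ProbabilityMeasure T)) :
    Set (ProbabilityMeasure T) :=
  {β ∈ E | f β ≤ Fval τ β E}

/-- The certainty operator `C_f(E) = ⋂ₙ B_f^n(E)`. -/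
def Cop (τ : T → ProbabilityMeasure (ProbabilityMeasure T))
    (f : ProbabilityMeasure T → ℝ) (E : Set (ProbabilityMeasure T)) :
    Set (ProbabilityMeasure T) :=
  ⋂ n : ℕ, (Bop τ f)^[n + 1] E

/-! An indicator of a closed set is the pointwise limit, from above, of uniformly bounded
continuous functions. This property is inherited by `μ ↦ ∫ g dμ` on `Δ(X)` (the approximants
`μ ↦ ∫ fₙ dμ` are weakly continuous, and converge by dominated convergence) and by composition
with continuous maps, and it implies upper semicontinuity. Applied to `μ ↦ μ(H) = ∫ 1_H dμ`
on `Δ(Δ(T))`, composed with `τ`, and integrated once more against `β`, it makes `β ↦ F_β(H)`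
upper semicontinuous. Since `x` is continuous, `B_x(H) = H ∩ {x ≤ F(H)}` is then closed, and
`C_x(H)` is an intersection of iterates of `B_x` applied to the closed set `H`. -/

open Filter Topology

section ContinuousUpperApprox

variable {X : Type*} [TopologicalSpace X]

def HasContinuousUpperApprox (g : X → ℝ) : Prop :=
  ∃ (f : ℕ → X → ℝ) (C : ℝ), (∀ n, Continuous (f n)) ∧ (∀ n x, ‖f n x‖ ≤ C) ∧
    (∀ n x, g x ≤ f n x) ∧ ∀ x, Tendsto (fun n => f n x) atTop (𝓝 (g x))

namespace HasContinuousUpperApprox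

variable {g : X → ℝ}

theorem upperSemicontinuous (hg : HasContinuousUpperApprox g) : UpperSemicontinuous g := by
  obtain ⟨f, -, hf, -, hle, hlim⟩ := hg
  intro x y hy
  obtain ⟨n, hn⟩ := ((hlim x).eventually_lt_const hy).exists
  filter_upwards [(hf n).continuousAt.eventually_lt_const hn] with x' hx'
  exact (hle n x').trans_lt hx'

theorem comp {Y : Type*} [TopologicalSpace Y] (hg : HasContinuousUpperApprox g) {φ : Y → X}
    (hφ : Continuous φ) : HasContinuousUpperApprox (g ∘ φ) := by
  obtain ⟨f, C, hf, hC, hle, hlim⟩ := hg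
  exact ⟨fun n => f n ∘ φ, C, fun n => (hf n).comp hφ, fun n y => hC n (φ y),
    fun n y => hle n (φ y), fun y => hlim (φ y)⟩

theorem integral [MeasurableSpace X] [OpensMeasurableSpace X] (hg : HasContinuousUpperApprox g) :
    HasContinuousUpperApprox fun μ : ProbabilityMeasure X => ∫ x, g x ∂μ := by
  obtain ⟨f, C, hf, hC, hle, hlim⟩ := hg
  have hg_bound : ∀ x, ‖g x‖ ≤ C := fun x => le_of_tendsto' (hlim x).norm (fun n => hC n x)
  have hg_meas : Measurable g :=
    measurable_of_tendsto_metrizable (fun n => (hf n).measurable) (tendsto_pi_nhds.2 hlim)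
  refine ⟨fun n μ => ∫ x, f n x ∂μ, C, fun n => ?_, fun n μ => ?_, fun n μ => ?_, fun μ => ?_⟩
  · simpa using ProbabilityMeasure.continuous_integral_boundedContinuousFunction
      (BoundedContinuousFunction.ofNormedAddCommGroup (f n) (hf n) C (hC n))
  · simpa using norm_integral_le_of_norm_le_const (μ := (μ : Measure X))
      (Eventually.of_forall (hC n))
  · exact integral_mono
      (.of_bound hg_meas.aestronglyMeasurable C (Eventually.of_forall hg_bound))
      (.of_bound (hf n).aestronglyMeasurable C (Eventually.of_forall (hC n))) (hle n)
  · exact tendsto_integral_of_dominated_convergence (fun _ => C)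
      (fun n => (hf n).aestronglyMeasurable) (integrable_const C)
      (fun n => Eventually.of_forall (hC n)) (Eventually.of_forall hlim)

end HasContinuousUpperApprox

theorem hasContinuousUpperApprox_indicator_one [HasOuterApproxClosed X] {F : Set X}
    (hF : IsClosed F) : HasContinuousUpperApprox (F.indicator (1 : X → ℝ)) := by
  refine ⟨fun n x => hF.apprSeq n x, 1,
    fun n => NNReal.continuous_coe.comp (hF.apprSeq n).continuous, fun n x => ?_, fun n x => ?_,
    fun x => ?_⟩
  · simpa using HasOuterApproxClosed.apprSeq_apply_le_one hF n x
  · have := HasOuterApproxClosed.indicator_le_apprSeq hF n x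
    rw [← NNReal.coe_le_coe, NNReal.coe_indicator] at this
    exact this
  · have := NNReal.tendsto_coe.2 (tendsto_pi_nhds.1 (HasOuterApproxClosed.tendsto_apprSeq hF) x)
    rw [NNReal.coe_indicator] at this
    exact this

theorem hasContinuousUpperApprox_measure_apply [HasOuterApproxClosed X] [MeasurableSpace X]
    [OpensMeasurableSpace X] {F : Set X} (hF : IsClosed F) :
    HasContinuousUpperApprox fun μ : ProbabilityMeasure X => (μ F : ℝ) := by
  simpa [integral_indicator_one hF.measurableSet] using
    (hasContinuousUpperApprox_indicator_one hF).integral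

end ContinuousUpperApprox

theorem continuous_xval {X : Type*} [TopologicalSpace X] [MeasurableSpace X]
    [OpensMeasurableSpace X] {σ : X → Set.Icc (-1:ℝ) 2} (hσ : Continuous σ) :
    Continuous (xval σ) := by
  have hσ_bound : ∀ t, ‖(σ t : ℝ)‖ ≤ 2 := fun t => abs_le.2 ⟨by linarith [(σ t).2.1], (σ t).2.2⟩
  exact ProbabilityMeasure.continuous_integral_boundedContinuousFunction
    (.ofNormedAddCommGroup _ (continuous_subtype_val.comp hσ) 2 hσ_bound)

section TypeSpace

variable {X : Type*} [TopologicalSpace X] [MeasurableSpace X] [BorelSpace X]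
  [TopologicalSpace.PseudoMetrizableSpace X] [TopologicalSpace.SeparableSpace X]
  {τ : X → ProbabilityMeasure (ProbabilityMeasure X)} {E : Set (ProbabilityMeasure X)}

theorem upperSemicontinuous_Fval (hτ : Continuous τ) (hE : IsClosed E) :
    UpperSemicontinuous fun β => Fval τ β E :=
  ((hasContinuousUpperApprox_measure_apply hE).comp hτ).integral.upperSemicontinuous

variable {f : ProbabilityMeasure X → ℝ}

theorem isClosed_Bop (hτ : Continuous τ) (hf : Continuous f) (hE : IsClosed E) :
    IsClosed (Bop τ f E) := by
  have hdiff : UpperSemicontinuous fun β => Fval τ β E + -f β :=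
    (upperSemicontinuous_Fval hτ hE).add hf.neg.upperSemicontinuous
  have hBop : Bop τ f E = E ∩ (fun β => Fval τ β E + -f β) ⁻¹' Set.Ici 0 := by
    ext β
    simp [Bop, ← sub_eq_add_neg]
  exact hBop ▸ hE.inter (hdiff.isClosed_preimage 0)

theorem isClosed_Cop (hτ : Continuous τ) (hf : Continuous f) (hE : IsClosed E) :
    IsClosed (Cop τ f E) :=
  isClosed_iInter fun n => Function.Iterate.rec IsClosed hE (fun _ => isClosed_Bop hτ hf) (n + 1)

end TypeSpace

/-- If `H ⊆ Δ(T)` is closed, then `β ↦ F_β(H)` is upper semicontinuous;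
consequently, for every closed `H`, the sets `B_x(H)` and `C_x(H)` are closed. -/
theorem gg_Fval_usc_and_Bx_Cx_closed
    (σ : T → Set.Icc (-1:ℝ) 2) (τ : T → ProbabilityMeasure (ProbabilityMeasure T))
    (hσ : Continuous σ) (hτ : Continuous τ)
    (H : Set (ProbabilityMeasure T)) (hH : IsClosed H) :
    UpperSemicontinuous (fun β => Fval τ β H) ∧
    IsClosed (Bop τ (xval σ) H) ∧
    IsClosed (Cop τ (xval σ) H) :=
  ⟨upperSemicontinuous_Fval hτ hH, isClosed_Bop hτ (continuous_xval hσ) hH,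
    isClosed_Cop hτ (continuous_xval hσ) hH⟩
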